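/- arXiv:1005.2199 — 6 statements merged into one kernel-verified Lean document; each statement's English description precedes it below -/
import Mathlib

section
/- Let p ≥ 2 be an integer, m = 3p² − 3p + 1, and r = m − (3p − 1). Then r³ ≡ 1 (mod m), r has multiplicative order exactly 3 modulo m, and both r − 1 and r² − 1 are units in ℤ/mℤ. -/
/-! In `ℤ/mℤ` the image `x` of `p` is a root of `3X² − 3X + 1`, and `r ≡ 1 − 3x`. For such an `x`,
`(1 − 3x)³ = 1` and `(1 − 3x) − 1 = −3x` has inverse `x − 1`. A cube root of unity `r` with `r − 1`
invertible satisfies `r² + r + 1 = 0`, so `r² − 1 = −r²(r − 1)` is invertible too, and `r ≠ 1`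
forces order `3`. -/

section CubeRootOfUnity

variable {R : Type*} [CommRing R]

theorem isUnit_sq_sub_one_of_pow_three_eq_one {r : R} (h3 : r ^ 3 = 1) (h1 : IsUnit (r - 1)) :
    IsUnit (r ^ 2 - 1) := by
  obtain ⟨b, hb⟩ := isUnit_iff_exists_inv.mp h1
  exact .of_mul_eq_one (-b * r) (by linear_combination hb - b * h3)

theorem orderOf_eq_three_of_pow_three_eq_one [Nontrivial R] {r : R} (h3 : r ^ 3 = 1)
    (h1 : IsUnit (r - 1)) : orderOf r = 3 :=
  orderOf_eq_prime h3 fun h => not_isUnit_zero (by rwa [h, sub_self] at h1)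

theorem one_sub_three_mul_pow_three_eq_one {x : R} (hx : 3 * x ^ 2 - 3 * x + 1 = 0) :
    (1 - 3 * x) ^ 3 = 1 := by
  linear_combination -9 * x * hx

theorem isUnit_one_sub_three_mul_sub_one {x : R} (hx : 3 * x ^ 2 - 3 * x + 1 = 0) :
    IsUnit (1 - 3 * x - 1) :=
  .of_mul_eq_one (x - 1) (by linear_combination -hx)

end CubeRootOfUnity

theorem natCast_three_mul_sq_sub_three_mul_add_one {R : Type*} [Ring R] (p : ℕ) :
    ((3 * p ^ 2 - 3 * p + 1 : ℕ) : R) = 3 * (p : R) ^ 2 - 3 * p + 1 := by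
  rw [Nat.cast_add, Nat.cast_sub (Nat.mul_le_mul_left 3 (Nat.le_self_pow two_ne_zero p))]
  push_cast
  rfl

theorem natCast_sub_three_mul_sub_one {R : Type*} [Ring R] {m p : ℕ} (hp : 1 ≤ p)
    (hm : 3 * p - 1 ≤ m) : ((m - (3 * p - 1) : ℕ) : R) = m - 3 * p + 1 := by
  rw [Nat.cast_sub hm, Nat.cast_sub (by omega)]
  push_cast
  abel

/-- For `p ≥ 2`, `m = 3p² − 3p + 1`, `r = m − (3p − 1)`: `r³ ≡ 1 (mod m)`,
`r` has order exactly `3` mod `m`, and `r − 1`, `r² − 1` are units in `ℤ/mℤ`. -/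
theorem stmt2 (p : ℕ) (hp : 2 ≤ p) :
    let m := 3 * p ^ 2 - 3 * p + 1
    let r := m - (3 * p - 1)
    ((r : ZMod m) ^ 3 = 1) ∧ orderOf (r : ZMod m) = 3 ∧
      IsUnit ((r : ZMod m) - 1) ∧ IsUnit ((r : ZMod m) ^ 2 - 1) := by
  intro m r
  have hp2 : 2 * p ≤ p ^ 2 := by rw [sq]; exact Nat.mul_le_mul_right p hp
  have : Fact (1 < m) := ⟨by omega⟩
  have hx : 3 * (p : ZMod m) ^ 2 - 3 * p + 1 = 0 := by
    rw [← natCast_three_mul_sq_sub_three_mul_add_one, ZMod.natCast_self]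
  have hr : (r : ZMod m) = 1 - 3 * p := by
    rw [natCast_sub_three_mul_sub_one (by omega) (by omega), ZMod.natCast_self]
    ring
  have h3 := one_sub_three_mul_pow_three_eq_one hx
  have h1 := isUnit_one_sub_three_mul_sub_one hx
  rw [hr]
  exact ⟨h3, orderOf_eq_three_of_pow_three_eq_one h3 h1, h1,
    isUnit_sq_sub_one_of_pow_three_eq_one h3 h1⟩
end

section
/- Let p ≥ 2 be an integer, m = 2p² − 2p + 1, and r = m − (2p − 1). Then r² ≡ −1 (mod m), so r has multiplicative order exactly 4 modulo m, and r^k − 1 is a unit in ℤ/mℤ for k = 1, 2, 3. -/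
/-!
Modulo `m` we have `r ≡ 1 − 2p` and `2p² − 2p + 1 ≡ 0`, so `r² = 1 + 2(2p² − 2p) = −1`.
Any `x` with `x² = −1` has order `4` as soon as `−1 ≠ 1`, and since `m` is odd, `2` is a unit:
then `(x − 1)(x + 1) = x² − 1 = −2` and `x³ − 1 = −(x + 1)` are units too.
-/

theorem sq_one_sub_two_mul_eq_neg_one {R : Type*} [CommRing R] {a : R}
    (ha : 2 * a ^ 2 - 2 * a + 1 = 0) : (1 - 2 * a) ^ 2 = -1 := by
  linear_combination 2 * ha

theorem orderOf_eq_four_of_sq_eq_neg_one {M : Type*} [Monoid M] [HasDistribNeg M] {x : M}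
    (hx : x ^ 2 = -1) (h : (-1 : M) ≠ 1) : orderOf x = 4 :=
  orderOf_eq_prime_pow (p := 2) (n := 1) (by rwa [pow_one, hx])
    (by rw [show 2 ^ (1 + 1) = 2 * 2 by rfl, pow_mul, hx, neg_one_sq])

theorem isUnit_pow_sub_one_of_sq_eq_neg_one {R : Type*} [CommRing R] {x : R}
    (hx : x ^ 2 = -1) (h2 : IsUnit (2 : R)) {k : ℕ} (hk : ¬ 4 ∣ k) : IsUnit (x ^ k - 1) := by
  have hx4 : x ^ 4 = 1 := by rw [show 4 = 2 * 2 by rfl, pow_mul, hx, neg_one_sq]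
  have hprod : (x - 1) * (x + 1) = -2 := by linear_combination hx
  have hsub : IsUnit (x - 1) := isUnit_of_mul_isUnit_left (hprod ▸ h2.neg)
  have hadd : IsUnit (x + 1) := isUnit_of_mul_isUnit_right (hprod ▸ h2.neg)
  rw [← Nat.mod_add_div k 4, pow_add, pow_mul, hx4, one_pow, mul_one]
  have hk4 : k % 4 < 4 := Nat.mod_lt k (by norm_num)
  have hk0 : k % 4 ≠ 0 := fun h => hk (Nat.dvd_of_mod_eq_zero h)
  interval_cases k % 4
  · exact absurd rfl hk0
  · rwa [pow_one]
  · rw [hx, show (-1 : R) - 1 = -2 by ring]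
    exact h2.neg
  · rw [show x ^ 3 - 1 = -(x + 1) by linear_combination x * hx]
    exact hadd.neg

theorem two_mul_sq_sub_two_mul_add_one_eq_zero (p : ℕ) :
    2 * (p : ZMod (2 * p ^ 2 - 2 * p + 1)) ^ 2 - 2 * p + 1 = 0 := by
  have h := ZMod.natCast_self (2 * p ^ 2 - 2 * p + 1)
  rwa [Nat.cast_add, Nat.cast_sub (by nlinarith), Nat.cast_mul, Nat.cast_mul, Nat.cast_pow,
    Nat.cast_ofNat, Nat.cast_one] at h

theorem natCast_sub_two_mul_sub_one_eq_one_sub_two_mul (p : ℕ) (hp : 1 ≤ p) :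
    ((2 * p ^ 2 - 2 * p + 1 - (2 * p - 1) : ℕ) : ZMod (2 * p ^ 2 - 2 * p + 1)) = 1 - 2 * p := by
  have hp2 : 2 * p ≤ p ^ 2 + 1 := by zify; nlinarith [sq_nonneg ((p : ℤ) - 1)]
  rw [Nat.cast_sub (by omega), ZMod.natCast_self, Nat.cast_sub (by omega)]
  push_cast
  ring

theorem ZMod.isUnit_two_of_odd {n : ℕ} (hn : Odd n) : IsUnit (2 : ZMod n) := by
  exact_mod_cast (ZMod.isUnit_iff_coprime 2 n).mpr (Nat.coprime_two_left.mpr hn)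

/-- For `p ≥ 2`, `m = 2p² − 2p + 1`, `r = m − (2p − 1)`: `r² ≡ −1 (mod m)`,
`r` has order exactly `4` mod `m`, and `r^k − 1` is a unit in `ℤ/mℤ` for `k = 1,2,3`. -/
theorem stmt3 (p : ℕ) (hp : 2 ≤ p) :
    let m := 2 * p ^ 2 - 2 * p + 1
    let r := m - (2 * p - 1)
    ((r : ZMod m) ^ 2 = -1) ∧ orderOf (r : ZMod m) = 4 ∧
      IsUnit ((r : ZMod m) ^ 1 - 1) ∧ IsUnit ((r : ZMod m) ^ 2 - 1) ∧
        IsUnit ((r : ZMod m) ^ 3 - 1) := by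
  intro m r
  have hr : (r : ZMod m) ^ 2 = -1 := by
    rw [natCast_sub_two_mul_sub_one_eq_one_sub_two_mul p (by omega)]
    exact sq_one_sub_two_mul_eq_neg_one (two_mul_sq_sub_two_mul_add_one_eq_zero p)
  have hm : m + 2 * p = 2 * p ^ 2 + 1 := by
    have : p ≤ p ^ 2 := Nat.le_self_pow two_ne_zero p
    omega
  have : Fact (2 < m) := ⟨by nlinarith⟩
  have h2 : IsUnit (2 : ZMod m) := ZMod.isUnit_two_of_odd ⟨p ^ 2 - p, by omega⟩
  exact ⟨hr, orderOf_eq_four_of_sq_eq_neg_one hr ZMod.neg_one_ne_one,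
    isUnit_pow_sub_one_of_sq_eq_neg_one hr h2 (by norm_num),
    isUnit_pow_sub_one_of_sq_eq_neg_one hr h2 (by norm_num),
    isUnit_pow_sub_one_of_sq_eq_neg_one hr h2 (by norm_num)⟩
end

section
/- Let p ≥ 2, m = p² − p + 1, and r = m − p + 1. If p ≡ 2 (mod 3) then 3 divides m and gcd(r² − 1, m) = gcd(r⁴ − 1, m) = 3; if p ≢ 2 (mod 3), then r² − 1 and r⁴ − 1 are units in ℤ/mℤ. -/
/-!
Modulo `m = p² − p + 1` we have `p² ≡ p − 1`, so `r = m − p + 1 ≡ 1 − p`, `r² ≡ −p` and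
`r⁴ ≡ p² ≡ p − 1`. Hence `gcd(r² − 1, m) = gcd(p + 1, m)` and `gcd(r⁴ − 1, m) = gcd(p − 2, m)`,
and since `m = (p + 1)(p − 2) + 3` both reduce to `gcd(·, 3)`, which is `3` exactly when
`p ≡ 2 (mod 3)` and `1` otherwise.
-/

theorem Int.ModEq.gcd_eq {a b m : ℤ} (h : a ≡ b [ZMOD m]) : Int.gcd a m = Int.gcd b m := by
  obtain ⟨k, hk⟩ := Int.modEq_iff_dvd.mp h
  rw [show b = a + m * k by linarith, Int.gcd_add_mul_left_left]

theorem Int.gcd_three_of_dvd {x : ℤ} (h : 3 ∣ x) : Int.gcd x 3 = 3 := by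
  exact_mod_cast Int.gcd_eq_right (by norm_num) h

theorem Int.gcd_three_of_not_dvd {x : ℤ} (h : ¬ 3 ∣ x) : Int.gcd x 3 = 1 := by
  rw [← Int.isCoprime_iff_gcd_eq_one, isCoprime_comm]
  exact (Int.prime_three.coprime_iff_not_dvd).mpr h

theorem ZMod.isUnit_intCast_iff_gcd_eq_one (a : ℤ) (m : ℕ) :
    IsUnit (a : ZMod m) ↔ Int.gcd a m = 1 := by
  rw [ZMod.coe_int_isUnit_iff_isCoprime, isCoprime_comm, Int.isCoprime_iff_gcd_eq_one]

section

variable (p : ℤ)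

theorem sq_sub_two_mul_add_two_sq_modEq :
    (p ^ 2 - 2 * p + 2) ^ 2 ≡ -p [ZMOD p ^ 2 - p + 1] :=
  Int.modEq_iff_dvd.mpr ⟨-(p ^ 2 - 3 * p + 4), by ring⟩

theorem sq_sub_two_mul_add_two_pow_four_modEq :
    (p ^ 2 - 2 * p + 2) ^ 4 ≡ p - 1 [ZMOD p ^ 2 - p + 1] := by
  have hsq : p ^ 2 ≡ p - 1 [ZMOD p ^ 2 - p + 1] := Int.modEq_iff_dvd.mpr ⟨-1, by ring⟩
  calc (p ^ 2 - 2 * p + 2) ^ 4 = ((p ^ 2 - 2 * p + 2) ^ 2) ^ 2 := by ring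
    _ ≡ (-p) ^ 2 [ZMOD p ^ 2 - p + 1] := (sq_sub_two_mul_add_two_sq_modEq p).pow 2
    _ = p ^ 2 := by ring
    _ ≡ p - 1 [ZMOD p ^ 2 - p + 1] := hsq

theorem gcd_add_one_sq_sub_add_one : Int.gcd (p + 1) (p ^ 2 - p + 1) = Int.gcd (p + 1) 3 := by
  rw [show p ^ 2 - p + 1 = 3 + (p + 1) * (p - 2) by ring, Int.gcd_add_mul_left_right]

theorem gcd_sub_two_sq_sub_add_one : Int.gcd (p - 2) (p ^ 2 - p + 1) = Int.gcd (p - 2) 3 := by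
  rw [show p ^ 2 - p + 1 = 3 + (p - 2) * (p + 1) by ring, Int.gcd_add_mul_left_right]

theorem gcd_sq_sub_one_sq_sub_add_one :
    Int.gcd ((p ^ 2 - 2 * p + 2) ^ 2 - 1) (p ^ 2 - p + 1) = Int.gcd (p + 1) 3 := by
  rw [((sq_sub_two_mul_add_two_sq_modEq p).sub_right 1).gcd_eq, show -p - 1 = -(p + 1) by ring,
    Int.neg_gcd, gcd_add_one_sq_sub_add_one]

theorem gcd_pow_four_sub_one_sq_sub_add_one :
    Int.gcd ((p ^ 2 - 2 * p + 2) ^ 4 - 1) (p ^ 2 - p + 1) = Int.gcd (p - 2) 3 := by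
  rw [((sq_sub_two_mul_add_two_pow_four_modEq p).sub_right 1).gcd_eq,
    show p - 1 - 1 = p - 2 by ring, gcd_sub_two_sq_sub_add_one]

end

theorem Nat.cast_sq_sub_add_one (p : ℕ) : ((p ^ 2 - p + 1 : ℕ) : ℤ) = (p : ℤ) ^ 2 - p + 1 := by
  push_cast [Nat.le_self_pow two_ne_zero p]; ring

theorem Nat.cast_sq_sub_add_one_sub_add_one (p : ℕ) :
    ((p ^ 2 - p + 1 - p + 1 : ℕ) : ℤ) = (p : ℤ) ^ 2 - 2 * p + 2 := by
  have hp : (p : ℤ) ≤ (p ^ 2 - p + 1 : ℕ) := by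
    rw [Nat.cast_sq_sub_add_one]; nlinarith [sq_nonneg ((p : ℤ) - 1)]
  rw [Nat.cast_add, Nat.cast_sub (Int.ofNat_le.mp hp), Nat.cast_sq_sub_add_one]; push_cast; ring

theorem Nat.gcd_sub_one_eq_intGcd {a : ℕ} (ha : 1 ≤ a) (m : ℕ) :
    Nat.gcd (a - 1) m = Int.gcd ((a : ℤ) - 1) m := by
  rw [← Int.gcd_natCast_natCast, Nat.cast_sub ha, Nat.cast_one]

theorem stmt5_general (p : ℕ) :
    let m := p ^ 2 - p + 1
    let r := m - p + 1
    (p % 3 = 2 → 3 ∣ m ∧ Nat.gcd (r ^ 2 - 1) m = 3 ∧ Nat.gcd (r ^ 4 - 1) m = 3) ∧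
    (p % 3 ≠ 2 → IsUnit ((r : ZMod m) ^ 2 - 1) ∧ IsUnit ((r : ZMod m) ^ 4 - 1)) := by
  intro m r
  have hgcd2 : Int.gcd ((r : ℤ) ^ 2 - 1) m = Int.gcd ((p : ℤ) + 1) 3 := by
    rw [Nat.cast_sq_sub_add_one_sub_add_one, Nat.cast_sq_sub_add_one,
      gcd_sq_sub_one_sq_sub_add_one]
  have hgcd4 : Int.gcd ((r : ℤ) ^ 4 - 1) m = Int.gcd ((p : ℤ) - 2) 3 := by
    rw [Nat.cast_sq_sub_add_one_sub_add_one, Nat.cast_sq_sub_add_one,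
      gcd_pow_four_sub_one_sq_sub_add_one]
  have hgcd_cast (k : ℕ) : Nat.gcd (r ^ k - 1) m = Int.gcd ((r : ℤ) ^ k - 1) m := by
    rw [Nat.gcd_sub_one_eq_intGcd (Nat.one_le_pow k r (m - p).succ_pos), Nat.cast_pow]
  have hunit_cast (k : ℕ) : (r : ZMod m) ^ k - 1 = (((r : ℤ) ^ k - 1 : ℤ) : ZMod m) := by
    push_cast; rfl
  refine ⟨fun hmod ↦ ?_, fun hmod ↦ ?_⟩
  · have h2 : Nat.gcd (r ^ 2 - 1) m = 3 := by
      rw [hgcd_cast, hgcd2, Int.gcd_three_of_dvd (by omega)]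
    refine ⟨h2 ▸ Nat.gcd_dvd_right _ _, h2, ?_⟩
    rw [hgcd_cast, hgcd4, Int.gcd_three_of_dvd (by omega)]
  · rw [hunit_cast, hunit_cast, ZMod.isUnit_intCast_iff_gcd_eq_one,
      ZMod.isUnit_intCast_iff_gcd_eq_one, hgcd2, hgcd4]
    exact ⟨Int.gcd_three_of_not_dvd (by omega), Int.gcd_three_of_not_dvd (by omega)⟩

/-- For `p ≥ 2`, `m = p² − p + 1`, `r = m − p + 1`: if `p ≡ 2 (mod 3)` then `3 ∣ m` and
`gcd(r² − 1, m) = gcd(r⁴ − 1, m) = 3`; otherwise `r² − 1` and `r⁴ − 1` are units mod `m`. -/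
theorem stmt5 (p : ℕ) (hp : 2 ≤ p) :
    let m := p ^ 2 - p + 1
    let r := m - p + 1
    (p % 3 = 2 → 3 ∣ m ∧ Nat.gcd (r ^ 2 - 1) m = 3 ∧ Nat.gcd (r ^ 4 - 1) m = 3) ∧
    (p % 3 ≠ 2 → IsUnit ((r : ZMod m) ^ 2 - 1) ∧ IsUnit ((r : ZMod m) ^ 4 - 1)) :=
  stmt5_general p
end

section
/- Let d, n' be positive integers such that every prime divisor of d divides n', and let l, l' be integers coprime to n'. Then l ≡ l' (mod gcd(d, n')) if and only if there exists an integer t with t ≡ 1 (mod d) and l' ≡ t·l (mod n'). -/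
/-!
The congruence `l' ≡ t * l [ZMOD n']` says `t ≡ l' * u [ZMOD n']`, where `u` is an inverse of `l`
modulo `n'`. So the question is whether the two congruences `t ≡ 1 [ZMOD d]` and
`t ≡ l' * u [ZMOD n']` have a common solution, which by the Chinese remainder theorem for
non-coprime moduli happens exactly when `1 ≡ l' * u` modulo `gcd d n'`, that is, when `l ≡ l'`.
-/

namespace Int

theorem exists_modEq_and_modEq_iff (m n a b : ℤ) :
    (∃ t, t ≡ a [ZMOD m] ∧ t ≡ b [ZMOD n]) ↔ a ≡ b [ZMOD gcd m n] := by
  constructor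
  · rintro ⟨t, hta, htb⟩
    exact (hta.of_dvd (gcd_dvd_left m n)).symm.trans (htb.of_dvd (gcd_dvd_right m n))
  · intro hab
    obtain ⟨k, hk⟩ := modEq_iff_dvd.mp hab
    -- Bézout `gcd m n = m * x + n * y` splits the difference `b - a` between the two moduli.
    have hbez : (gcd m n : ℤ) = m * gcdA m n + n * gcdB m n := gcd_eq_gcd_ab m n
    refine ⟨a + m * gcdA m n * k, ?_, ?_⟩
    · exact modEq_iff_dvd.mpr ⟨-(gcdA m n * k), by ring⟩
    · exact modEq_iff_dvd.mpr ⟨gcdB m n * k, by linear_combination hk + k * hbez⟩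

theorem modEq_mul_right_iff_of_mul_modEq_one {m a b l u : ℤ} (hu : u * l ≡ 1 [ZMOD m]) :
    a ≡ b * l [ZMOD m] ↔ a * u ≡ b [ZMOD m] := by
  constructor
  · intro h
    calc a * u ≡ b * l * u [ZMOD m] := h.mul_right u
      _ = b * (u * l) := by ring
      _ ≡ b * 1 [ZMOD m] := hu.mul_left b
      _ = b := mul_one b
  · intro h
    calc a = a * 1 := (mul_one a).symm
      _ ≡ a * (u * l) [ZMOD m] := (hu.mul_left a).symm
      _ = a * u * l := by ring
      _ ≡ b * l [ZMOD m] := h.mul_right l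

end Int

theorem stmt13_general (d n' : ℕ)
    (l l' : ℤ) (hl : IsCoprime l (n' : ℤ)) :
    l ≡ l' [ZMOD (Nat.gcd d n' : ℤ)] ↔
      ∃ t : ℤ, t ≡ 1 [ZMOD (d : ℤ)] ∧ l' ≡ t * l [ZMOD (n' : ℤ)] := by
  obtain ⟨u, v, huv⟩ := hl
  have hu : u * l ≡ 1 [ZMOD n'] := Int.modEq_iff_dvd.mpr ⟨v, by linear_combination -huv⟩
  have hu_gcd : u * l ≡ 1 [ZMOD (Nat.gcd d n' : ℤ)] :=
    hu.of_dvd (Int.natCast_dvd_natCast.mpr (Nat.gcd_dvd_right d n'))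
  calc l ≡ l' [ZMOD (Nat.gcd d n' : ℤ)] ↔ l' ≡ 1 * l [ZMOD (Nat.gcd d n' : ℤ)] := by
        rw [one_mul]; exact Int.modEq_comm
    _ ↔ 1 ≡ l' * u [ZMOD (Nat.gcd d n' : ℤ)] :=
        (Int.modEq_mul_right_iff_of_mul_modEq_one hu_gcd).trans Int.modEq_comm
    _ ↔ ∃ t : ℤ, t ≡ 1 [ZMOD d] ∧ t ≡ l' * u [ZMOD n'] := by
        rw [Int.exists_modEq_and_modEq_iff, Int.gcd_natCast_natCast]
    _ ↔ ∃ t : ℤ, t ≡ 1 [ZMOD d] ∧ l' ≡ t * l [ZMOD n'] :=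
        exists_congr fun t => and_congr_right' <|
          Int.modEq_comm.trans (Int.modEq_mul_right_iff_of_mul_modEq_one hu).symm

/-- Let `d, n'` be positive integers such that every prime divisor of `d` divides `n'`,
and `l, l'` integers coprime to `n'`. Then `l ≡ l' (mod gcd(d, n'))` iff there exists `t`
with `t ≡ 1 (mod d)` and `l' ≡ t·l (mod n')`. -/
theorem stmt13 (d n' : ℕ) (hd : 0 < d) (hn' : 0 < n')
    (h : ∀ q : ℕ, q.Prime → q ∣ d → q ∣ n')
    (l l' : ℤ) (hl : IsCoprime l (n' : ℤ)) (hl' : IsCoprime l' (n' : ℤ)) :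
    l ≡ l' [ZMOD (Nat.gcd d n' : ℤ)] ↔
      ∃ t : ℤ, t ≡ 1 [ZMOD (d : ℤ)] ∧ l' ≡ t * l [ZMOD (n' : ℤ)] :=
  stmt13_general d n' l l' hl
end

section
/- Let p ≥ 2, m = 3p² − 3p + 1, n = 9p, ζ a primitive m-th root of unity, η a primitive n-th root of unity, and γ = η^{3p} (a primitive cube root of unity). Define linear substitutions on ℂ[X₁, X₂, X₃] by S: (X₁, X₂, X₃) ↦ (ζ⁻¹X₁, ζ^{3p−1}X₂, ζ^{−(3p−2)}X₃) and T: (X₁, X₂, X₃) ↦ (η⁻¹X₃, η⁻¹X₁, η⁻¹X₂). Then the polynomial f = X₁^{3p−1}X₂ + γ X₂^{3p−1}X₃ + γ² X₃^{3p−1}X₁ satisfies f∘S = f and f∘T = f. -/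
/-! The substitution `S` is diagonal, so it multiplies each monomial `Xᵢ^k Xⱼ` of `f` (with
`k = 3p - 1`) by `cᵢ^k cⱼ`; for `S` these scalars are powers of `ζ` whose exponents are
`0` and `±((3p-1)(3p-2) + 1) = ±3m`, hence all equal to `1`. The substitution `T` permutes the
three monomials cyclically and multiplies each by `η^{-3p} = γ⁻¹ = γ²`, which exactly permutes
the coefficients `1, γ, γ²`. -/

open MvPolynomial

section KleinPoly

variable {R : Type*} [CommRing R]

noncomputable def kleinPoly (k : ℕ) (γ : R) : MvPolynomial (Fin 3) R :=
  X 0 ^ k * X 1 + C γ * (X 1 ^ k * X 2) + C (γ ^ 2) * (X 2 ^ k * X 0)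

theorem aeval_diagonal_kleinPoly {k : ℕ} {γ a b c : R}
    (hab : a ^ k * b = 1) (hbc : b ^ k * c = 1) (hca : c ^ k * a = 1) :
    aeval ![C a * X 0, C b * X 1, C c * X 2] (kleinPoly k γ) = kleinPoly k γ := by
  replace hab := congrArg (C : R → MvPolynomial (Fin 3) R) hab
  replace hbc := congrArg (C : R → MvPolynomial (Fin 3) R) hbc
  replace hca := congrArg (C : R → MvPolynomial (Fin 3) R) hca
  simp only [map_mul, map_pow, map_one] at hab hbc hca
  simp only [kleinPoly, map_add, map_mul, map_pow, aeval_C, aeval_X, algebraMap_eq,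
    Matrix.cons_val_zero, Matrix.cons_val_one, Matrix.cons_val_two, Matrix.head_cons,
    Matrix.tail_cons]
  linear_combination (X 0 ^ k * X 1) * hab + C γ * (X 1 ^ k * X 2) * hbc +
    C γ ^ 2 * (X 2 ^ k * X 0) * hca

theorem aeval_cyclic_kleinPoly {k : ℕ} {γ u : R} (hγ : γ ^ 3 = 1) (hu : u ^ (k + 1) * γ = 1) :
    aeval ![C u * X 2, C u * X 0, C u * X 1] (kleinPoly k γ) = kleinPoly k γ := by
  have hu' : u ^ (k + 1) = γ ^ 2 := by linear_combination γ ^ 2 * hu - u ^ (k + 1) * hγ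
  replace hu := congrArg (C : R → MvPolynomial (Fin 3) R) hu
  replace hu' := congrArg (C : R → MvPolynomial (Fin 3) R) hu'
  simp only [map_mul, map_pow, map_one] at hu hu'
  simp only [kleinPoly, map_add, map_mul, map_pow, aeval_C, aeval_X, algebraMap_eq,
    Matrix.cons_val_zero, Matrix.cons_val_one, Matrix.cons_val_two, Matrix.head_cons,
    Matrix.tail_cons]
  linear_combination (X 2 ^ k * X 0) * hu' + (X 0 ^ k * X 1) * hu +
    C γ * (X 1 ^ k * X 2) * hu

end KleinPoly

section Field

variable {K : Type*} [Field K]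

theorem aeval_diagonal_kleinPoly_of_pow_eq_one {n : ℕ} (hn : 2 ≤ n) {γ ζ : K}
    (hζ : ζ ^ ((n - 1) * (n - 2) + 1) = 1) :
    aeval ![C ζ⁻¹ * X 0, C (ζ ^ (n - 1)) * X 1, C (ζ ^ (n - 2))⁻¹ * X 2] (kleinPoly (n - 1) γ) =
      kleinPoly (n - 1) γ := by
  have hζ0 : ζ ≠ 0 := by rintro rfl; simp at hζ
  refine aeval_diagonal_kleinPoly ?_ ?_ ?_
  · rw [inv_pow, inv_mul_cancel₀ (pow_ne_zero _ hζ0)]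
  · have : (n - 1) * (n - 1) = (n - 1) * (n - 2) + 1 + (n - 2) := by
      obtain ⟨m, rfl⟩ : ∃ m, n = m + 2 := ⟨n - 2, by omega⟩
      simp only [Nat.add_sub_cancel, Nat.add_succ_sub_one]
      ring
    rw [← pow_mul, this, pow_add, hζ, one_mul, mul_inv_cancel₀ (pow_ne_zero _ hζ0)]
  · rw [inv_pow, ← pow_mul, ← inv_pow, ← pow_succ, inv_pow, Nat.mul_comm (n - 2), hζ, inv_one]

theorem aeval_cyclic_kleinPoly_of_pow_eq_one {n : ℕ} (hn : n ≠ 0) {η : K}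
    (hη : η ^ (3 * n) = 1) :
    aeval ![C η⁻¹ * X 2, C η⁻¹ * X 0, C η⁻¹ * X 1] (kleinPoly (n - 1) (η ^ n)) =
      kleinPoly (n - 1) (η ^ n) := by
  have hη0 : η ≠ 0 := by rintro rfl; simp [hn] at hη
  refine aeval_cyclic_kleinPoly ?_ ?_
  · rw [← pow_mul, mul_comm, hη]
  · rw [Nat.sub_add_cancel (Nat.one_le_iff_ne_zero.mpr hn), inv_pow,
      inv_mul_cancel₀ (pow_ne_zero _ hη0)]

end Field

/-- The Klein-type polynomial `f = X₁^{3p−1}X₂ + γX₂^{3p−1}X₃ + γ²X₃^{3p−1}X₁` is invariant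
under the substitutions `S : (X₁,X₂,X₃) ↦ (ζ⁻¹X₁, ζ^{3p−1}X₂, ζ^{−(3p−2)}X₃)` and
`T : (X₁,X₂,X₃) ↦ (η⁻¹X₃, η⁻¹X₁, η⁻¹X₂)`, where `ζ, η` are primitive `m`-th and `n`-th
roots of unity (`m = 3p² − 3p + 1`, `n = 9p`) and `γ = η^{3p}`. -/
theorem stmt15 (p : ℕ) (hp : 2 ≤ p) (ζ η : ℂ)
    (hζ : IsPrimitiveRoot ζ (3 * p ^ 2 - 3 * p + 1))
    (hη : IsPrimitiveRoot η (9 * p)) :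
    let γ : ℂ := η ^ (3 * p)
    let f : MvPolynomial (Fin 3) ℂ :=
      X 0 ^ (3 * p - 1) * X 1 + C γ * (X 1 ^ (3 * p - 1) * X 2) +
        C (γ ^ 2) * (X 2 ^ (3 * p - 1) * X 0)
    aeval ![C ζ⁻¹ * X 0, C (ζ ^ (3 * p - 1)) * X 1, C (ζ ^ (3 * p - 2))⁻¹ * X 2] f = f ∧
      aeval ![C η⁻¹ * X 2, C η⁻¹ * X 0, C η⁻¹ * X 1] f = f := by
  intro γ f
  have h3m : (3 * p - 1) * (3 * p - 2) + 1 = (3 * p ^ 2 - 3 * p + 1) * 3 := by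
    zify [show 2 ≤ 3 * p by omega, show 1 ≤ 3 * p by omega,
      show 3 * p ≤ 3 * p ^ 2 by nlinarith]
    ring
  refine ⟨aeval_diagonal_kleinPoly_of_pow_eq_one (by omega) ?_,
    aeval_cyclic_kleinPoly_of_pow_eq_one (by omega) ?_⟩
  · rw [h3m, pow_mul, hζ.pow_eq_one, one_pow]
  · rw [← mul_assoc, show 3 * 3 = 9 by rfl, hη.pow_eq_one]
end

section
/- Let p ≥ 2 be an integer and γ = exp(2πi/6). Define f(x, y) = x + γ x^{p+1} y + γ² x^{2p} y^{p+1} + γ³ x^{2p−1} y^{2p} + γ⁴ x^{p−1} y^{2p−1} + γ⁵ y^{p−1}. Then f(−1, −1) = 0 and ∂f/∂x(−1, −1) = 2 − 2p − 2p(−1)^p + γ(−1)^p(2p − 2) ≠ 0; hence the plane curve f = 0 is smooth at the point (−1, −1). -/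
/-!
The number `γ = exp(2πi/6)` is a root of the sixth cyclotomic polynomial `X² - X + 1`, which
has no real roots. Substituting `(-1, -1)`, every monomial of `f` and of `∂f/∂x`
becomes a signed power of `γ`, and reducing with `γ² = γ - 1` gives `f(-1, -1) = 0` and the
stated value of the derivative. That value has the form `a + γ b` with `a, b` real and
`b = (-1)^p (2p - 2) ≠ 0` for `p ≥ 2`, so its imaginary part `b · Im γ` does not vanish.
-/

open Complex

lemma IsPrimitiveRoot.sq_sub_self_add_one_eq_zero {R : Type*} [CommRing R] [IsDomain R] {ζ : R}
    (hζ : IsPrimitiveRoot ζ 6) : ζ ^ 2 - ζ + 1 = 0 := by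
  simpa [Polynomial.cyclotomic_six] using hζ.isRoot_cyclotomic (by norm_num)

section SixthRoot

variable {ζ : ℂ}

lemma im_ne_zero_of_sq_sub_self_add_one_eq_zero (hζ : ζ ^ 2 - ζ + 1 = 0) : ζ.im ≠ 0 := by
  intro him
  have hre : ζ.re ^ 2 - ζ.re + 1 = 0 := by
    simpa [sq, Complex.ext_iff, him] using hζ
  nlinarith [sq_nonneg (ζ.re - 1 / 2)]

lemma ofReal_add_mul_ofReal_ne_zero (hζ : ζ.im ≠ 0) {a b : ℝ} (hb : b ≠ 0) :
    (a : ℂ) + ζ * b ≠ 0 := by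
  intro h
  have him := congrArg Complex.im h
  simp only [add_im, ofReal_im, mul_im, ofReal_re, zero_add, mul_zero, zero_im] at him
  exact mul_ne_zero hζ hb him

def sixTermCurve (ζ : ℂ) (p : ℕ) (x y : ℂ) : ℂ :=
  x + ζ * x ^ (p + 1) * y + ζ ^ 2 * x ^ (2 * p) * y ^ (p + 1) +
    ζ ^ 3 * x ^ (2 * p - 1) * y ^ (2 * p) + ζ ^ 4 * x ^ (p - 1) * y ^ (2 * p - 1) +
    ζ ^ 5 * y ^ (p - 1)

lemma sixTermCurve_neg_one_neg_one (hζ : ζ ^ 2 - ζ + 1 = 0) {p : ℕ} (hp : 1 ≤ p) :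
    sixTermCurve ζ p (-1) (-1) = 0 := by
  obtain ⟨q, rfl⟩ : ∃ q, p = q + 1 := ⟨p - 1, by omega⟩
  rw [sixTermCurve, show 2 * (q + 1) - 1 = 2 * q + 1 by omega, show q + 1 - 1 = q by omega]
  simp only [pow_add, pow_mul, neg_one_sq, one_pow, one_mul]
  linear_combination ((-1 : ℂ) ^ q * (ζ ^ 3 - ζ) - ζ - 1) * hζ

lemma hasDerivAt_sixTermCurve (ζ : ℂ) (p : ℕ) (x y : ℂ) :
    HasDerivAt (fun x => sixTermCurve ζ p x y)
      (1 + ζ * ((p + 1 : ℕ) * x ^ p) * y + ζ ^ 2 * ((2 * p : ℕ) * x ^ (2 * p - 1)) * y ^ (p + 1) +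
        ζ ^ 3 * ((2 * p - 1 : ℕ) * x ^ (2 * p - 1 - 1)) * y ^ (2 * p) +
        ζ ^ 4 * ((p - 1 : ℕ) * x ^ (p - 1 - 1)) * y ^ (2 * p - 1) + 0) x :=
  (((((hasDerivAt_id x).add (((hasDerivAt_pow (p + 1) x).const_mul ζ).mul_const y)).add
    (((hasDerivAt_pow (2 * p) x).const_mul (ζ ^ 2)).mul_const (y ^ (p + 1)))).add
    (((hasDerivAt_pow (2 * p - 1) x).const_mul (ζ ^ 3)).mul_const (y ^ (2 * p)))).add
    (((hasDerivAt_pow (p - 1) x).const_mul (ζ ^ 4)).mul_const (y ^ (2 * p - 1)))).add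
    (hasDerivAt_const x (ζ ^ 5 * y ^ (p - 1)))

lemma deriv_sixTermCurve_neg_one (hζ : ζ ^ 2 - ζ + 1 = 0) {p : ℕ} (hp : 2 ≤ p) :
    deriv (fun x => sixTermCurve ζ p x (-1)) (-1) =
      2 - 2 * (p : ℂ) - 2 * (p : ℂ) * (-1 : ℂ) ^ p + ζ * (-1 : ℂ) ^ p * (2 * (p : ℂ) - 2) := by
  rw [(hasDerivAt_sixTermCurve ζ p (-1) (-1)).deriv]
  obtain ⟨q, rfl⟩ : ∃ q, p = q + 2 := ⟨p - 2, by omega⟩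
  rw [show 2 * (q + 2) - 1 = 2 * q + 3 by omega, show 2 * q + 3 - 1 = 2 * q + 2 by omega,
    show q + 2 - 1 = q + 1 by omega, show q + 1 - 1 = q by omega]
  push_cast
  simp only [pow_add, pow_mul, neg_one_sq, one_pow, one_mul]
  linear_combination ((2 * (q : ℂ) + 3) * (ζ + 1) +
    (-1 : ℂ) ^ q * (-((q : ℂ) + 1) * ζ ^ 2 - ((q : ℂ) + 1) * ζ + (2 * (q : ℂ) + 4))) * hζ

end SixthRoot

/-- For `p ≥ 2` and `γ = exp(2πi/6)`, the polynomial
`f(x,y) = x + γx^{p+1}y + γ²x^{2p}y^{p+1} + γ³x^{2p−1}y^{2p} + γ⁴x^{p−1}y^{2p−1} + γ⁵y^{p−1}`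
satisfies `f(−1,−1) = 0` and `∂f/∂x(−1,−1) = 2 − 2p − 2p(−1)^p + γ(−1)^p(2p−2) ≠ 0`;
hence the curve `f = 0` is smooth at `(−1,−1)`. -/
theorem stmt18 (p : ℕ) (hp : 2 ≤ p) :
    let γ : ℂ := Complex.exp (2 * Real.pi * Complex.I / 6)
    let f : ℂ → ℂ → ℂ := fun x y =>
      x + γ * x ^ (p + 1) * y + γ ^ 2 * x ^ (2 * p) * y ^ (p + 1) +
        γ ^ 3 * x ^ (2 * p - 1) * y ^ (2 * p) + γ ^ 4 * x ^ (p - 1) * y ^ (2 * p - 1) +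
        γ ^ 5 * y ^ (p - 1)
    f (-1) (-1) = 0 ∧
      deriv (fun x => f x (-1)) (-1) =
        2 - 2 * (p : ℂ) - 2 * (p : ℂ) * (-1 : ℂ) ^ p + γ * (-1 : ℂ) ^ p * (2 * (p : ℂ) - 2) ∧
      2 - 2 * (p : ℂ) - 2 * (p : ℂ) * (-1 : ℂ) ^ p + γ * (-1 : ℂ) ^ p * (2 * (p : ℂ) - 2) ≠ 0 := by
  intro γ f
  have hγ : γ ^ 2 - γ + 1 = 0 := by
    have hprim : IsPrimitiveRoot γ 6 := by
      simpa using Complex.isPrimitiveRoot_exp 6 (by norm_num)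
    exact hprim.sq_sub_self_add_one_eq_zero
  refine ⟨sixTermCurve_neg_one_neg_one hγ (by omega), deriv_sixTermCurve_neg_one hγ hp, ?_⟩
  have hp' : (2 : ℝ) ≤ p := by exact_mod_cast hp
  have hb : (-1 : ℝ) ^ p * (2 * p - 2) ≠ 0 :=
    mul_ne_zero (pow_ne_zero _ (by norm_num)) (by linarith)
  have := ofReal_add_mul_ofReal_ne_zero (im_ne_zero_of_sq_sub_self_add_one_eq_zero hγ)
    (a := 2 - 2 * p - 2 * p * (-1) ^ p) hb
  push_cast at this
  convert this using 1
  ring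
end
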